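/- arXiv:1008.3211 — 2 statements merged into one kernel-verified Lean document; each statement's English description precedes it below -/
import Mathlib

section
/- Let G be a compact group with Haar measure μ, X a complex Banach space, ρ : G → GL(X) a strongly continuous representation, and F ∈ X' a nonzero continuous linear functional satisfying F(ρ(g)y) = λ(g)F(y) for all g ∈ G, y ∈ X, where λ : G → ℂ is a continuous homomorphism with |λ(g)| = 1. Then there exists a nonzero x₀ ∈ X with ρ(g)x₀ = λ(g)x₀ for all g ∈ G and F(x₀) ≠ 0. -/
/-!
Averaging an orbit against the character produces eigenvectors: for any `x`, the vector
`x₀ = ∫ λ(h⁻¹) • ρ(h) x dμ(h)` satisfies `ρ(g) x₀ = λ(g) x₀` by left invariance of `μ`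
(substitute `k = g h`). If `F` is an eigenfunctional, `F(λ(h⁻¹) • ρ(h) x) = F x` for every `h`,
so `F x₀ = μ(G) F x`, which is nonzero as soon as `F x ≠ 0`.
-/

open MeasureTheory

section TwistedAverage

variable {G : Type*} [Group G] [MeasurableSpace G] {X : Type*} [NormedAddCommGroup X]
  [NormedSpace ℂ X]

/-- For a unitary character `lam h⁻¹ = conj (lam h)`, so this is the usual twisted average. -/
noncomputable def twistedAverage (μ : Measure G) (ρ : G →* (X ≃L[ℂ] X)) (lam : G →* ℂ)
    (x : X) : X :=
  ∫ h, lam h⁻¹ • ρ h x ∂μ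

theorem map_twistedAverage [MeasurableMul G] (μ : Measure G) [μ.IsMulLeftInvariant]
    (ρ : G →* (X ≃L[ℂ] X)) (lam : G →* ℂ) (x : X) (g : G) :
    ρ g (twistedAverage μ ρ lam x) = lam g • twistedAverage μ ρ lam x := by
  have translate : ∀ h, ρ g (lam h⁻¹ • ρ h x) = (fun k => lam (k⁻¹ * g) • ρ k x) (g * h) := by
    intro h
    simp only [mul_inv_rev, inv_mul_cancel_right, map_smul, map_mul]
    rfl
  have untwist : ∀ k, lam (k⁻¹ * g) • ρ k x = lam g • lam k⁻¹ • ρ k x := by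
    intro k
    rw [map_mul, smul_smul, mul_comm]
  rw [twistedAverage, ← ContinuousLinearEquiv.integral_comp_comm]
  simp only [translate]
  rw [integral_mul_left_eq_self (fun k => lam (k⁻¹ * g) • ρ k x) g]
  simp only [untwist, integral_smul]

theorem apply_twistedAverage_of_eigen [CompleteSpace X] (μ : Measure G) (ρ : G →* (X ≃L[ℂ] X))
    (lam : G →* ℂ) (F : X →L[ℂ] ℂ) (heig : ∀ (g : G) (y : X), F (ρ g y) = lam g * F y) (x : X)
    (hint : Integrable (fun h => lam h⁻¹ • ρ h x) μ) :
    F (twistedAverage μ ρ lam x) = μ.real Set.univ • F x := by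
  have hconst : ∀ h, F (lam h⁻¹ • ρ h x) = F x := by
    intro h
    rw [map_smul, heig, smul_eq_mul, ← mul_assoc, ← map_mul, inv_mul_cancel, map_one, one_mul]
  rw [twistedAverage, ← F.integral_comp_comm hint]
  simp only [hconst, integral_const]

end TwistedAverage

theorem exists_eigenvector_of_eigenfunctional_general {G : Type*} [Group G] [TopologicalSpace G]
    [IsTopologicalGroup G] [CompactSpace G] [MeasurableSpace G] [BorelSpace G]
    (μ : Measure G) [μ.IsHaarMeasure]
    {X : Type*} [NormedAddCommGroup X] [NormedSpace ℂ X] [CompleteSpace X]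
    (ρ : G →* (X ≃L[ℂ] X)) (hρ : ∀ x : X, Continuous fun g => ρ g x)
    (F : X →L[ℂ] ℂ) (hF : F ≠ 0)
    (lam : G →* ℂ) (hlamc : Continuous lam)
    (heig : ∀ (g : G) (y : X), F (ρ g y) = lam g * F y) :
    ∃ x₀ : X, x₀ ≠ 0 ∧ (∀ g, ρ g x₀ = lam g • x₀) ∧ F x₀ ≠ 0 := by
  obtain ⟨x, hx⟩ : ∃ x, F x ≠ 0 := by simpa [ContinuousLinearMap.ext_iff] using hF
  have hint : Integrable (fun h => lam h⁻¹ • ρ h x) μ :=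
    ((hlamc.comp continuous_inv).smul (hρ x)).integrable_of_hasCompactSupport
      (.of_compactSpace _)
  have hFx₀ : F (twistedAverage μ ρ lam x) ≠ 0 := by
    rw [apply_twistedAverage_of_eigen μ ρ lam F heig x hint]
    exact smul_ne_zero measureReal_univ_pos.ne' hx
  exact ⟨_, fun h => hFx₀ (by rw [h, map_zero]), map_twistedAverage μ ρ lam x, hFx₀⟩

/-- For a strongly continuous representation of a compact group on a Banach space and a nonzero
eigenfunctional `F` with character `λ`, there is an eigenvector `x₀` with `F x₀ ≠ 0`. -/
theorem exists_eigenvector_of_eigenfunctional {G : Type*} [Group G] [TopologicalSpace G]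
    [IsTopologicalGroup G] [CompactSpace G] [MeasurableSpace G] [BorelSpace G]
    (μ : Measure G) [μ.IsHaarMeasure]
    {X : Type*} [NormedAddCommGroup X] [NormedSpace ℂ X] [CompleteSpace X]
    (ρ : G →* (X ≃L[ℂ] X)) (hρ : ∀ x : X, Continuous fun g => ρ g x)
    (F : X →L[ℂ] ℂ) (hF : F ≠ 0)
    (lam : G →* ℂ) (hlamc : Continuous lam) (hlam1 : ∀ g, ‖lam g‖ = 1)
    (heig : ∀ (g : G) (y : X), F (ρ g y) = lam g * F y) :
    ∃ x₀ : X, x₀ ≠ 0 ∧ (∀ g, ρ g x₀ = lam g • x₀) ∧ F x₀ ≠ 0 :=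
  exists_eigenvector_of_eigenfunctional_general μ ρ hρ F hF lam hlamc heig
end

section
/- Let G be a locally compact group, X a Banach space, π a nonsingular continuous representation of L¹(G) on X with associated bounded strongly continuous group representation ρ (so π = π_ρ), and F ∈ X' an eigenfunctional for π: F(π(f)(x)) = λ(f)F(x) for all f ∈ L¹(G), x ∈ X. Then F is an eigenfunctional for ρ: there is a function λ̃ : G → ℂ with F(ρ(g)(x)) = λ̃(g)F(x) for all g ∈ G and x ∈ X. -/
/-!
Pairing the eigenvalue equation with test functions `φ ∈ C_c(G)` shows that for all `x, y` the
continuous function `h ↦ F(ρ h x) F y - F(ρ h y) F x` integrates to `λ(φ) F x F y - λ(φ) F y F x = 0`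
against every `φ`, so it vanishes identically. Hence `F(ρ g x) = (F(ρ g x₀) / F x₀) F x` for any
`x₀` with `F x₀ ≠ 0`.
-/

open MeasureTheory

theorem Continuous.eq_zero_of_forall_integral_mul_eq_zero {X 𝕜 : Type*} [RCLike 𝕜]
    [TopologicalSpace X] [RegularSpace X] [LocallyCompactSpace X] [MeasurableSpace X]
    [OpensMeasurableSpace X] {μ : Measure X} [IsFiniteMeasureOnCompacts μ] [μ.IsOpenPosMeasure]
    {f : X → 𝕜} (hf : Continuous f)
    (h : ∀ φ : X → 𝕜, Continuous φ → HasCompactSupport φ → ∫ x, φ x * f x ∂μ = 0) :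
    f = 0 := by
  funext x₀
  by_contra hx₀
  obtain ⟨χ, hχ_supp, hχ_nonneg, hχ_x₀⟩ := exists_continuous_nonneg_pos x₀
  -- test against `χ · conj f`, which turns the integrand into `χ ‖f‖² ≥ 0`
  set r : X → ℝ := fun x => χ x * ‖f x‖ ^ 2
  have hr_pos : 0 < ∫ x, r x ∂μ :=
    (χ.continuous.mul (hf.norm.pow 2)).integral_pos_of_hasCompactSupport_nonneg_nonzero
      hχ_supp.mul_right (fun x => mul_nonneg (hχ_nonneg x) (sq_nonneg _))
      (mul_ne_zero hχ_x₀ (pow_ne_zero 2 (norm_ne_zero_iff.mpr hx₀)))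
  have hr_zero : ∫ x, (r x : 𝕜) ∂μ = 0 := by
    have hφ_supp : HasCompactSupport fun x => (χ x : 𝕜) :=
      hχ_supp.comp_left RCLike.ofReal_zero
    convert h (fun x => (χ x : 𝕜) * starRingEnd 𝕜 (f x))
      ((RCLike.continuous_ofReal.comp χ.continuous).mul (RCLike.continuous_conj.comp hf))
      hφ_supp.mul_right using 3 with x
    simp only [r, RCLike.ofReal_mul, RCLike.ofReal_pow, mul_assoc, RCLike.conj_mul]
  rw [integral_ofReal, RCLike.ofReal_eq_zero] at hr_zero
  exact hr_pos.ne' hr_zero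

theorem mul_eq_mul_of_forall_integral_mul_eq {X 𝕜 : Type*} [RCLike 𝕜]
    [TopologicalSpace X] [RegularSpace X] [LocallyCompactSpace X] [MeasurableSpace X]
    [OpensMeasurableSpace X] {μ : Measure X} [IsFiniteMeasureOnCompacts μ] [μ.IsOpenPosMeasure]
    {u v : X → 𝕜} (hu : Continuous u) (hv : Continuous v) (lam : (X → 𝕜) → 𝕜) (a b : 𝕜)
    (hua : ∀ φ : X → 𝕜, Continuous φ → HasCompactSupport φ → ∫ x, φ x * u x ∂μ = lam φ * a)
    (hvb : ∀ φ : X → 𝕜, Continuous φ → HasCompactSupport φ → ∫ x, φ x * v x ∂μ = lam φ * b)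
    (x : X) : u x * b = v x * a := by
  rw [← sub_eq_zero]
  refine congrFun ((hu.mul_const b).sub (hv.mul_const a)
    |>.eq_zero_of_forall_integral_mul_eq_zero (μ := μ) fun φ hφ hφ_supp => ?_) x
  have integrable {w : X → 𝕜} (hw : Continuous w) (c : 𝕜) :
      Integrable (fun x => φ x * w x * c) μ :=
    ((hφ.mul hw).mul_const c).integrable_of_hasCompactSupport hφ_supp.mul_right.mul_right
  calc ∫ x, φ x * (u x * b - v x * a) ∂μ
      = ∫ x, φ x * u x * b ∂μ - ∫ x, φ x * v x * a ∂μ := by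
        rw [← integral_sub (integrable hu b) (integrable hv a)]
        simp only [mul_sub, mul_assoc]
    _ = lam φ * a * b - lam φ * b * a := by
        rw [integral_mul_const, integral_mul_const, hua φ hφ hφ_supp, hvb φ hφ hφ_supp]
    _ = 0 := by ring

theorem exists_forall_apply_eq_mul_of_forall_mul_eq {ι X K : Type*} [Field K] (F : X → K)
    (T : ι → X → X) (h : ∀ i x y, F (T i x) * F y = F (T i y) * F x) :
    ∃ c : ι → K, ∀ i x, F (T i x) = c i * F x := by
  by_cases hF : ∃ x₀, F x₀ ≠ 0
  · obtain ⟨x₀, hx₀⟩ := hF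
    refine ⟨fun i => F (T i x₀) / F x₀, fun i x => ?_⟩
    rw [div_mul_eq_mul_div, eq_div_iff hx₀]
    exact h i x x₀
  · push Not at hF
    exact ⟨0, fun i x => by simp [hF]⟩

theorem eigenfunctional_of_algebra_eigenfunctional_general {G : Type*} [Group G] [TopologicalSpace G]
    [IsTopologicalGroup G] [LocallyCompactSpace G] [MeasurableSpace G] [BorelSpace G]
    (μ : Measure G) [μ.IsHaarMeasure]
    {X : Type*} [NormedAddCommGroup X] [NormedSpace ℂ X] [CompleteSpace X]
    (ρ : G →* (X ≃L[ℂ] X))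
    (hρ : ∀ x : X, Continuous fun g => ρ g x)
    (F : X →L[ℂ] ℂ) (lam : (G → ℂ) → ℂ)
    (heig : ∀ φ : G → ℂ, Continuous φ → HasCompactSupport φ →
      ∀ x : X, F (∫ g, φ g • ρ g x ∂μ) = lam φ * F x) :
    ∃ lamt : G → ℂ, ∀ (g : G) (x : X), F (ρ g x) = lamt g * F x := by
  have coeff_eig (x : X) (φ : G → ℂ) (hφ : Continuous φ) (hφ_supp : HasCompactSupport φ) :
      ∫ g, φ g * F (ρ g x) ∂μ = lam φ * F x := by
    have hint : Integrable (fun g => φ g • ρ g x) μ :=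
      (hφ.smul (hρ x)).integrable_of_hasCompactSupport hφ_supp.smul_right
    rw [← heig φ hφ hφ_supp x, ← F.integral_comp_comm hint]
    simp only [map_smul, smul_eq_mul]
  exact exists_forall_apply_eq_mul_of_forall_mul_eq F (fun g => ρ g) fun g x y =>
    mul_eq_mul_of_forall_integral_mul_eq (F.continuous.comp (hρ x)) (F.continuous.comp (hρ y))
      lam (F x) (F y) (coeff_eig x) (coeff_eig y) g

/-- If `F` is an eigenfunctional for the associated group-algebra representation
`π_ρ(φ)(x) = ∫ φ(g) • ρ(g)x dg` of a bounded strongly continuous representation `ρ`,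
then `F` is an eigenfunctional for `ρ` itself. -/
theorem eigenfunctional_of_algebra_eigenfunctional {G : Type*} [Group G] [TopologicalSpace G]
    [IsTopologicalGroup G] [LocallyCompactSpace G] [MeasurableSpace G] [BorelSpace G]
    (μ : Measure G) [μ.IsHaarMeasure]
    {X : Type*} [NormedAddCommGroup X] [NormedSpace ℂ X] [CompleteSpace X]
    (ρ : G →* (X ≃L[ℂ] X)) (hbdd : ∃ M : ℝ, ∀ g, ‖(ρ g : X →L[ℂ] X)‖ ≤ M)
    (hρ : ∀ x : X, Continuous fun g => ρ g x)
    (F : X →L[ℂ] ℂ) (hF : F ≠ 0) (lam : (G → ℂ) → ℂ)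
    (heig : ∀ φ : G → ℂ, Continuous φ → HasCompactSupport φ →
      ∀ x : X, F (∫ g, φ g • ρ g x ∂μ) = lam φ * F x) :
    ∃ lamt : G → ℂ, ∀ (g : G) (x : X), F (ρ g x) = lamt g * F x :=
  eigenfunctional_of_algebra_eigenfunctional_general μ ρ hρ F lam heig
end
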